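/- For every integer n ≥ 2 and every nonempty subset T of [n−1], the graph Γ(n,T) is regular, i.e. all of its vertices have the same degree. -/

import Mathlib

open Finset

/-- `Iv n` is the set `[n] = {1, …, n}` as a finset of naturals (with `Iv 0 = ∅`). -/
def Iv (n : ℕ) : Finset ℕ := Finset.Icc 1 n

/-- `f` is a flag of the ground set `[n]`: a set of nonempty proper subsets of `[n]`
that is totally ordered by inclusion. -/
def IsFlag (n : ℕ) (f : Finset (Finset ℕ)) : Prop :=
  (∀ A ∈ f, A.Nonempty ∧ A ⊆ Iv n ∧ A ≠ Iv n) ∧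
  ∀ A ∈ f, ∀ B ∈ f, A ⊆ B ∨ B ⊆ A

/-- The type of a flag: the set of cardinalities of its members. -/
def flagType (f : Finset (Finset ℕ)) : Finset ℕ := f.image Finset.card

/-- The vertices of `Γ(n, T)`: flags of `[n]` of type `T`. -/
def FlagV (n : ℕ) (T : Finset ℕ) : Type :=
  {f : Finset (Finset ℕ) // IsFlag n f ∧ flagType f = T}

/-- Two flags of `[n]` are in general position. -/
def GenPos (n : ℕ) (f g : Finset (Finset ℕ)) : Prop :=
  ∀ A ∈ f, ∀ B ∈ g, A ∩ B = ∅ ∨ A ∪ B = Iv n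

/-- The graph `Γ(n, T)` on the flags of `[n]` of type `T`, two distinct flags being
adjacent iff they are in general position. -/
def flagGraph (n : ℕ) (T : Finset ℕ) : SimpleGraph (FlagV n T) where
  Adj f g := f ≠ g ∧ GenPos n f.1 g.1
  symm := by
    refine ⟨?_⟩
    rintro f g ⟨hne, h⟩
    refine ⟨hne.symm, fun A hA B hB => ?_⟩
    rcases h B hB A hA with h' | h'
    · exact Or.inl (by rwa [Finset.inter_comm])
    · exact Or.inr (by rwa [Finset.union_comm])
  loopless := ⟨fun f h => h.1 rfl⟩

/-- A set of vertices is independent: pairwise nonadjacent. -/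
def IsIndep {V : Type*} (G : SimpleGraph V) (s : Set V) : Prop :=
  ∀ ⦃u⦄, u ∈ s → ∀ ⦃v⦄, v ∈ s → ¬ G.Adj u v

/-- A maximal independent set: independent, and no vertex can be added to it
keeping it independent. -/
def IsMaxIndep {V : Type*} (G : SimpleGraph V) (s : Set V) : Prop :=
  IsIndep G s ∧ ∀ v ∉ s, ¬ IsIndep G (insert v s)

/-- The independence number of a graph: the largest cardinality of an independent set. -/
noncomputable def indepNum {V : Type*} (G : SimpleGraph V) : ℕ :=
  sSup {k | ∃ s : Set V, IsIndep G s ∧ s.ncard = k}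

/-- Two sets of vertices are equivalent when some automorphism of the graph maps
one onto the other. -/
def EquivIndep {V : Type*} (G : SimpleGraph V) (s t : Set V) : Prop :=
  ∃ φ : G ≃g G, ⇑φ '' s = t

/-- The projection of a flag to the sub-type `S`: keep only the members whose
cardinality lies in `S`. -/
def projFlag (S : Finset ℕ) (f : Finset (Finset ℕ)) : Finset (Finset ℕ) :=
  f.filter (fun A => A.card ∈ S)

/-- Condition (I) of Example 3.1: `[i] ⊆ B ⊆ [n-1]`. -/
def condI (n i : ℕ) (B : Finset ℕ) : Prop := Iv i ⊆ B ∧ B ⊆ Iv (n - 1)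

/-- Condition (II) of Example 3.1: `min A ≤ i` and `[min A] ⊆ B`. -/
def condII (i : ℕ) (A B : Finset ℕ) : Prop :=
  ∃ j ∈ A, (∀ k ∈ A, j ≤ k) ∧ j ≤ i ∧ Iv j ⊆ B

/-- The set `F_i(n,a,b)` of flags `(A,B)` of `[n]` of type `{a,b}` satisfying
condition (I) or condition (II). -/
def Fi (n a b i : ℕ) : Set (FlagV n {a, b}) :=
  {f | ∃ A B : Finset ℕ, A ∈ f.1 ∧ B ∈ f.1 ∧ A.card = a ∧ B.card = b ∧
        (condI n i B ∨ condII i A B)}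

/-- The set `bar F_i(n,a,b)` for `i = 2b-n+1`: flags `(A,B)` of type `{a,b}` with
`[i] ⊆ B` or condition (II). -/
def FiBar (n a b : ℕ) : Set (FlagV n {a, b}) :=
  {f | ∃ A B : Finset ℕ, A ∈ f.1 ∧ B ∈ f.1 ∧ A.card = a ∧ B.card = b ∧
        (Iv (2 * b - n + 1) ⊆ B ∨ condII (2 * b - n + 1) A B)}

/-- The rational number `i₀ = b - 1 - (n-b)(n-b-1)/a`. -/
def izero (n a b : ℕ) : ℚ :=
  (b : ℚ) - 1 - ((n : ℚ) - b) * ((n : ℚ) - b - 1) / a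

/-- The index `i = max{0, ⌈i₀⌉}`. -/
def iDef (n a b : ℕ) : ℕ := (max 0 ⌈izero n a b⌉).toNat

/-- `f(n,a,b)`: the largest cardinality of the sets `F_j(n,a,b)`, `0 ≤ j ≤ 2b-n+1`. -/
noncomputable def fMax (n a b : ℕ) : ℕ :=
  (Finset.range (2 * b - n + 2)).sup (fun j => (Fi n a b j).ncard)

/-- An independent set of `Γ(n,{a,b})` is of standard type if it has cardinality
`f(n,a,b)` and some automorphism of the graph maps it onto one of the sets of
Example 3.1. -/
noncomputable def IsStandardType (n a b : ℕ) (F : Set (FlagV n {a, b})) : Prop :=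
  F.ncard = fMax n a b ∧
  ∃ φ : flagGraph n {a, b} ≃g flagGraph n {a, b},
    (∃ j ≤ 2 * b - n + 1, ⇑φ '' F = Fi n a b j) ∨ ⇑φ '' F = FiBar n a b

-- card is injective on a chain
lemma chain_card_inj {f : Finset (Finset ℕ)}
    (hf : ∀ A ∈ f, ∀ B ∈ f, A ⊆ B ∨ B ⊆ A) {A B : Finset ℕ}
    (hA : A ∈ f) (hB : B ∈ f) (h : A.card = B.card) : A = B := by
  rcases hf A hA B hB with h' | h'
  · exact Finset.eq_of_subset_of_card_le h' h.ge
  · exact (Finset.eq_of_subset_of_card_le h' h.le).symm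

lemma flagType_erase {f : Finset (Finset ℕ)}
    (hf : ∀ A ∈ f, ∀ B ∈ f, A ⊆ B ∨ B ⊆ A) {A : Finset ℕ} (hA : A ∈ f) :
    flagType (f.erase A) = (flagType f).erase A.card := by
  ext t
  simp only [flagType, Finset.mem_image, Finset.mem_erase]
  constructor
  · rintro ⟨C, ⟨hne, hC⟩, rfl⟩
    exact ⟨fun h => hne (chain_card_inj hf hC hA h), C, hC, rfl⟩
  · rintro ⟨hne, C, hC, rfl⟩
    exact ⟨C, ⟨fun h => hne (by rw [h]), hC⟩, rfl⟩

-- bijection between equicardinal finsets, identity outside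
lemma exists_extend_bij (S S' : Finset ℕ) (h : S.card = S'.card) :
    ∃ σ : ℕ → ℕ, Set.BijOn σ ↑S ↑S' ∧ ∀ x ∉ S, σ x = x := by
  let e := Finset.equivOfCardEq h
  refine ⟨fun x => if hx : x ∈ S then (e ⟨x, hx⟩ : ℕ) else x, ⟨?_, ?_, ?_⟩, fun x hx => dif_neg hx⟩
  · intro x hx
    simp only [Finset.mem_coe] at hx
    simp only [dif_pos hx, Finset.mem_coe]
    exact (e ⟨x, hx⟩).2
  · intro x hx y hy hxy
    simp only [Finset.mem_coe] at hx hy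
    simp only [dif_pos hx, dif_pos hy] at hxy
    have := e.injective (Subtype.ext hxy)
    exact congrArg Subtype.val this
  · intro y hy
    simp only [Finset.mem_coe] at hy
    refine ⟨(e.symm ⟨y, hy⟩ : ℕ), (e.symm ⟨y, hy⟩).2, ?_⟩
    simp only [dif_pos (e.symm ⟨y, hy⟩).2]
    have : e ⟨(e.symm ⟨y, hy⟩ : ℕ), (e.symm ⟨y, hy⟩).2⟩ = ⟨y, hy⟩ := by
      rw [show (⟨(e.symm ⟨y, hy⟩ : ℕ), (e.symm ⟨y, hy⟩).2⟩ : {x // x ∈ S}) = e.symm ⟨y, hy⟩ from rfl]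
      exact e.apply_symm_apply _
    exact congrArg Subtype.val this

lemma chain_exists_bij (f : Finset (Finset ℕ)) :
    ∀ (g : Finset (Finset ℕ)) (S S' : Finset ℕ),
    (∀ A ∈ f, ∀ B ∈ f, A ⊆ B ∨ B ⊆ A) →
    (∀ A ∈ g, ∀ B ∈ g, A ⊆ B ∨ B ⊆ A) →
    (∀ A ∈ f, A ⊆ S) → (∀ B ∈ g, B ⊆ S') → S.card = S'.card →
    flagType f = flagType g →
    ∃ σ : ℕ → ℕ, Set.BijOn σ ↑S ↑S' ∧ (∀ x ∉ S, σ x = x) ∧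
      f.image (fun A => A.image σ) = g := by
  induction f using Finset.strongInduction with
  | _ f IH =>
  intro g S S' hf hg hfS hgS hcard htype
  rcases f.eq_empty_or_nonempty with rfl | hfne
  · have hg0 : g = ∅ := by
      have : flagType g = ∅ := by rw [← htype]; rfl
      simpa [flagType, Finset.image_eq_empty] using this
    obtain ⟨σ, h1, h2⟩ := exists_extend_bij S S' hcard
    exact ⟨σ, h1, h2, by simp [hg0]⟩
  · -- pick max-cardinality members
    have htne : (flagType f).Nonempty := hfne.image _
    set m := (flagType f).max' htne with hm
    have hmf : m ∈ flagType f := (flagType f).max'_mem htne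
    have hmg : m ∈ flagType g := htype ▸ hmf
    obtain ⟨A, hAf, hAcard⟩ := Finset.mem_image.mp hmf
    obtain ⟨B, hBg, hBcard⟩ := Finset.mem_image.mp hmg
    have hsubA : ∀ C ∈ f, C ⊆ A := by
      intro C hC
      rcases hf C hC A hAf with h | h
      · exact h
      · have h1 : C.card ≤ m := Finset.le_max' _ _ (Finset.mem_image_of_mem _ hC)
        have h2 : A = C := Finset.eq_of_subset_of_card_le h (by omega)
        simp [← h2]
    have hsubB : ∀ C ∈ g, C ⊆ B := by
      intro C hC
      rcases hg C hC B hBg with h | h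
      · exact h
      · have h1 : C.card ≤ m := Finset.le_max' _ _
          (by rw [htype]; exact Finset.mem_image_of_mem _ hC)
        have h2 : B = C := Finset.eq_of_subset_of_card_le h (by omega)
        simp [← h2]
    have hABcard : A.card = B.card := by rw [hAcard, hBcard]
    -- IH on f.erase A with ground sets A, B
    obtain ⟨σ₁, hσ₁, hσ₁id, hσ₁im⟩ :=
      IH (f.erase A) (Finset.erase_ssubset hAf) (g.erase B) A B
        (fun C hC D hD => hf C (Finset.mem_of_mem_erase hC) D (Finset.mem_of_mem_erase hD))
        (fun C hC D hD => hg C (Finset.mem_of_mem_erase hC) D (Finset.mem_of_mem_erase hD))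
        (fun C hC => hsubA C (Finset.mem_of_mem_erase hC))
        (fun C hC => hsubB C (Finset.mem_of_mem_erase hC))
        hABcard
        (by rw [flagType_erase hf hAf, flagType_erase hg hBg, htype, hAcard, hBcard])
    -- complement bijection
    have hAS : A ⊆ S := hfS A hAf
    have hBS' : B ⊆ S' := hgS B hBg
    obtain ⟨σ₂, hσ₂, hσ₂id⟩ := exists_extend_bij (S \ A) (S' \ B)
      (by rw [Finset.card_sdiff_of_subset hAS, Finset.card_sdiff_of_subset hBS', hcard, hABcard])
    refine ⟨fun x => if x ∈ A then σ₁ x else σ₂ x, ⟨?_, ?_, ?_⟩, ?_, ?_⟩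
    · intro x hx
      simp only [Finset.mem_coe] at hx ⊢
      by_cases hxA : x ∈ A
      · simp only [if_pos hxA]
        exact hBS' (hσ₁.mapsTo hxA)
      · simp only [if_neg hxA]
        have : σ₂ x ∈ S' \ B := hσ₂.mapsTo (Finset.mem_sdiff.mpr ⟨hx, hxA⟩)
        exact (Finset.mem_sdiff.mp this).1
    · intro x hx y hy hxy
      simp only [Finset.mem_coe] at hx hy
      by_cases hxA : x ∈ A <;> by_cases hyA : y ∈ A
      · simp only [if_pos hxA, if_pos hyA] at hxy
        exact hσ₁.injOn hxA hyA hxy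
      · simp only [if_pos hxA, if_neg hyA] at hxy
        have h1 : σ₁ x ∈ B := hσ₁.mapsTo hxA
        have h2 : σ₂ y ∈ S' \ B := hσ₂.mapsTo (Finset.mem_sdiff.mpr ⟨hy, hyA⟩)
        rw [hxy] at h1
        exact absurd h1 (Finset.mem_sdiff.mp h2).2
      · simp only [if_neg hxA, if_pos hyA] at hxy
        have h1 : σ₁ y ∈ B := hσ₁.mapsTo hyA
        have h2 : σ₂ x ∈ S' \ B := hσ₂.mapsTo (Finset.mem_sdiff.mpr ⟨hx, hxA⟩)
        rw [← hxy] at h1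
        exact absurd h1 (Finset.mem_sdiff.mp h2).2
      · simp only [if_neg hxA, if_neg hyA] at hxy
        exact hσ₂.injOn (Finset.mem_sdiff.mpr ⟨hx, hxA⟩) (Finset.mem_sdiff.mpr ⟨hy, hyA⟩) hxy
    · intro y hy
      simp only [Finset.mem_coe] at hy
      by_cases hyB : y ∈ B
      · obtain ⟨x, hx, hxy⟩ := hσ₁.surjOn hyB
        simp only [Finset.mem_coe] at hx
        exact ⟨x, Finset.mem_coe.mpr (hAS hx), by simp only [if_pos hx]; exact hxy⟩
      · obtain ⟨x, hx, hxy⟩ := hσ₂.surjOn (Finset.mem_coe.mpr (Finset.mem_sdiff.mpr ⟨hy, hyB⟩))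
        simp only [Finset.mem_coe, Finset.mem_sdiff] at hx
        exact ⟨x, Finset.mem_coe.mpr hx.1, by simp only [if_neg hx.2]; exact hxy⟩
    · intro x hx
      have hxA : x ∉ A := fun h => hx (hAS h)
      have hxSA : x ∉ S \ A := fun h => hx (Finset.mem_sdiff.mp h).1
      simp only [if_neg hxA]
      exact hσ₂id x hxSA
    · -- image equality
      have hAeq : A.image (fun x => if x ∈ A then σ₁ x else σ₂ x) = B := by
        have h1 : A.image (fun x => if x ∈ A then σ₁ x else σ₂ x) = A.image σ₁ :=
          Finset.image_congr (fun x hx => if_pos hx)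
        rw [h1]
        have hsub : A.image σ₁ ⊆ B := by
          intro y hy
          obtain ⟨x, hx, rfl⟩ := Finset.mem_image.mp hy
          exact hσ₁.mapsTo hx
        have hc : A.card = (A.image σ₁).card := (Finset.card_image_of_injOn hσ₁.injOn).symm
        exact Finset.eq_of_subset_of_card_le hsub (by omega)
      calc f.image (fun C => C.image (fun x => if x ∈ A then σ₁ x else σ₂ x))
          = (insert A (f.erase A)).image
              (fun C => C.image (fun x => if x ∈ A then σ₁ x else σ₂ x)) := by
            rw [Finset.insert_erase hAf]
        _ = insert B ((f.erase A).image (fun C => C.image σ₁)) := by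
            rw [Finset.image_insert, hAeq]
            congr 1
            refine Finset.image_congr (fun C hC => ?_)
            exact Finset.image_congr (fun x hx => if_pos (hsubA C (Finset.mem_of_mem_erase hC) hx))
        _ = insert B (g.erase B) := by rw [hσ₁im]
        _ = g := Finset.insert_erase hBg

-- a function injective with image (Iv n) = Iv n acts on flags
lemma flagMap_isFlag {n : ℕ} {T : Finset ℕ} (τ : ℕ → ℕ) (hinj : Function.Injective τ)
    (him : (Iv n).image τ = Iv n) (f : Finset (Finset ℕ))
    (hf : IsFlag n f ∧ flagType f = T) :
    IsFlag n (f.image (fun A => A.image τ)) ∧ flagType (f.image (fun A => A.image τ)) = T := by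
  obtain ⟨⟨hmem, hchain⟩, htype⟩ := hf
  refine ⟨⟨?_, ?_⟩, ?_⟩
  · intro A' hA'
    obtain ⟨A, hA, rfl⟩ := Finset.mem_image.mp hA'
    obtain ⟨hne, hsub, hneq⟩ := hmem A hA
    refine ⟨hne.image τ, ?_, ?_⟩
    · rw [← him]; exact Finset.image_subset_image hsub
    · intro h
      have h1 : (A.image τ).card = A.card := Finset.card_image_of_injective _ hinj
      have h2 : A.card < (Iv n).card :=
        Finset.card_lt_card (Finset.ssubset_iff_subset_ne.mpr ⟨hsub, hneq⟩)
      rw [h] at h1; omega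
  · intro A' hA' B' hB'
    obtain ⟨A, hA, rfl⟩ := Finset.mem_image.mp hA'
    obtain ⟨B, hB, rfl⟩ := Finset.mem_image.mp hB'
    rcases hchain A hA B hB with h | h
    · exact Or.inl (Finset.image_subset_image h)
    · exact Or.inr (Finset.image_subset_image h)
  · rw [← htype]
    unfold flagType
    rw [Finset.image_image]
    exact Finset.image_congr (fun A _ => Finset.card_image_of_injective _ hinj)

def flagPerm {n : ℕ} {T : Finset ℕ} (τ : ℕ → ℕ) (hinj : Function.Injective τ)
    (him : (Iv n).image τ = Iv n) : FlagV n T → FlagV n T :=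
  fun f => ⟨f.1.image (fun A => A.image τ), flagMap_isFlag τ hinj him f.1 f.2⟩

lemma flagPerm_injective {n : ℕ} {T : Finset ℕ} (τ : ℕ → ℕ) (hinj : Function.Injective τ)
    (him : (Iv n).image τ = Iv n) : Function.Injective (flagPerm (n := n) (T := T) τ hinj him) := by
  intro f g h
  have h1 : f.1.image (fun A => A.image τ) = g.1.image (fun A => A.image τ) :=
    congrArg Subtype.val h
  have hinj2 : Function.Injective (fun A : Finset ℕ => A.image τ) :=
    Finset.image_injective hinj
  exact Subtype.ext (Finset.image_injective hinj2 h1)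

lemma flagPerm_adj {n : ℕ} {T : Finset ℕ} (τ : ℕ → ℕ) (hinj : Function.Injective τ)
    (him : (Iv n).image τ = Iv n) {f g : FlagV n T} (h : (flagGraph n T).Adj f g) :
    (flagGraph n T).Adj (flagPerm τ hinj him f) (flagPerm τ hinj him g) := by
  obtain ⟨hne, hgp⟩ := h
  refine ⟨fun heq => hne (flagPerm_injective τ hinj him heq), ?_⟩
  intro A' hA' B' hB'
  obtain ⟨A, hA, rfl⟩ := Finset.mem_image.mp hA'
  obtain ⟨B, hB, rfl⟩ := Finset.mem_image.mp hB'
  rcases hgp A hA B hB with h | h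
  · left
    rw [← Finset.image_inter _ _ hinj, h, Finset.image_empty]
  · right
    rw [← Finset.image_union, h, him]

/-- For every integer `n ≥ 2` and every nonempty subset `T` of `[n-1]`,
the graph `Γ(n,T)` is regular: all of its vertices have the same degree. -/
theorem regular_flagGraph (n : ℕ) (hn : 2 ≤ n) (T : Finset ℕ)
    (hT : T.Nonempty) (hTsub : T ⊆ Iv (n - 1)) :
    ∃ d : ℕ, ∀ v : FlagV n T, ((flagGraph n T).neighborSet v).ncard = d := by
  rcases isEmpty_or_nonempty (FlagV n T) with hE | hNE
  · exact ⟨0, fun v => (hE.false v).elim⟩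
  · obtain ⟨v₀⟩ := hNE
    refine ⟨((flagGraph n T).neighborSet v₀).ncard, fun w => ?_⟩
    -- get σ mapping v₀'s flag onto w's flag
    obtain ⟨σ, hbij, hid, him⟩ := chain_exists_bij v₀.1 w.1 (Iv n) (Iv n)
      v₀.2.1.2 w.2.1.2
      (fun A hA => (v₀.2.1.1 A hA).2.1) (fun B hB => (w.2.1.1 B hB).2.1) rfl
      (by rw [v₀.2.2, w.2.2])
    -- σ is a global bijection
    have hσinj : Function.Injective σ := by
      intro x y hxy
      by_cases hx : x ∈ Iv n <;> by_cases hy : y ∈ Iv n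
      · exact hbij.injOn hx hy hxy
      · exfalso
        have h1 : σ x ∈ (Iv n : Set ℕ) := hbij.mapsTo hx
        rw [hxy, hid y hy] at h1
        exact hy h1
      · exfalso
        have h1 : σ y ∈ (Iv n : Set ℕ) := hbij.mapsTo hy
        rw [← hxy, hid x hx] at h1
        exact hx h1
      · rw [hid x hx, hid y hy] at hxy; exact hxy
    have hσsurj : Function.Surjective σ := by
      intro y
      by_cases hy : y ∈ Iv n
      · obtain ⟨x, _, hxy⟩ := hbij.surjOn (Finset.mem_coe.mpr hy)
        exact ⟨x, hxy⟩
      · exact ⟨y, hid y hy⟩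
    let E : ℕ ≃ ℕ := Equiv.ofBijective σ ⟨hσinj, hσsurj⟩
    have hEcoe : ⇑E = σ := rfl
    have himF : (Iv n).image σ = Iv n := by
      apply Finset.coe_injective
      rw [Finset.coe_image]
      exact hbij.image_eq
    -- inverse
    have hinvinj : Function.Injective ⇑E.symm := E.symm.injective
    have hinvim : (Iv n).image ⇑E.symm = Iv n := by
      conv_lhs => rw [← himF]
      rw [← hEcoe, Finset.image_image]
      simp
    set Φ := flagPerm (n := n) (T := T) σ hσinj himF with hΦ
    set Ψ := flagPerm (n := n) (T := T) ⇑E.symm hinvinj hinvim with hΨ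
    have hΨΦ : ∀ u, Ψ (Φ u) = u := by
      intro u
      apply Subtype.ext
      show (u.1.image (fun A => A.image σ)).image (fun A => A.image ⇑E.symm) = u.1
      rw [Finset.image_image]
      have : ((fun A : Finset ℕ => A.image ⇑E.symm) ∘ (fun A : Finset ℕ => A.image σ)) =
          fun A : Finset ℕ => A := by
        funext A
        simp only [Function.comp_apply, Finset.image_image]
        rw [← hEcoe]
        simp
      rw [this, Finset.image_id']
    have hΦΨ : ∀ u, Φ (Ψ u) = u := by
      intro u
      apply Subtype.ext
      show (u.1.image (fun A => A.image ⇑E.symm)).image (fun A => A.image σ) = u.1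
      rw [Finset.image_image]
      have : ((fun A : Finset ℕ => A.image σ) ∘ (fun A : Finset ℕ => A.image ⇑E.symm)) =
          fun A : Finset ℕ => A := by
        funext A
        simp only [Function.comp_apply, Finset.image_image]
        rw [← hEcoe]
        simp
      rw [this, Finset.image_id']
    have hΦv₀ : Φ v₀ = w := Subtype.ext him
    have himage : Φ '' ((flagGraph n T).neighborSet v₀) = (flagGraph n T).neighborSet w := by
      ext u
      simp only [Set.mem_image, SimpleGraph.mem_neighborSet]
      constructor
      · rintro ⟨x, hx, rfl⟩
        rw [← hΦv₀]
        exact flagPerm_adj σ hσinj himF hx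
      · intro h
        rw [← hΦv₀] at h
        have := flagPerm_adj ⇑E.symm hinvinj hinvim h
        rw [← hΨ, hΨΦ v₀] at this
        exact ⟨Ψ u, this, hΦΨ u⟩
    rw [← himage, hΦ]
    exact (Set.ncard_image_of_injective ((flagGraph n T).neighborSet v₀)
      (flagPerm_injective σ hσinj himF))
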